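/- arXiv:2003.13786 — 4 statements merged into one kernel-verified Lean document; each statement's English description precedes it below -/
import Mathlib

section
/- If a finite simple graph G contains no induced cycle on 4 or more vertices (G is chordal), then the complement of G contains no induced cycle on 5 or more vertices. -/
open SimpleGraph

/-- An embedding of graphs induces an embedding of their complements. -/
def embCompl {α β : Type*} {A : SimpleGraph α} {B : SimpleGraph β} (f : A ↪g B) :
    Aᶜ ↪g Bᶜ where
  toEmbedding := f.toEmbedding
  map_rel_iff' := by
    intro a b
    simp [SimpleGraph.compl_adj, f.map_adj_iff, f.injective.ne_iff]

/-- `C₅` embeds (as an induced subgraph) in its own complement. -/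
def c5EmbComplC5 : cycleGraph 5 ↪g (cycleGraph 5)ᶜ where
  toEmbedding := ⟨fun i => 2 * i, by decide⟩
  map_rel_iff' := by decide

/-- `C₄` embeds (as an induced subgraph) in the complement of `C_{n+6}`. -/
def c4EmbComplC : (n : ℕ) → cycleGraph 4 ↪g (cycleGraph (n + 6))ᶜ := fun n =>
  { toEmbedding := ⟨![⟨0, by omega⟩, ⟨3, by omega⟩, ⟨1, by omega⟩, ⟨4, by omega⟩], by
      intro a b
      fin_cases a <;> fin_cases b <;> simp [Fin.ext_iff]⟩
    map_rel_iff' := by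
      intro a b
      fin_cases a <;> fin_cases b <;>
        simp [SimpleGraph.compl_adj, cycleGraph_adj', Fin.ext_iff, Fin.sub_def, Fin.neg_def,
            Fin.val_natCast, Fin.val_ofNat] <;>
        simp (disch := omega) [Nat.mod_eq_sub_mod, Nat.mod_eq_of_lt] <;> omega }

/-- If a finite simple graph `G` contains no induced cycle on 4 or more vertices
(i.e. `G` is chordal), then the complement of `G` contains no induced cycle on 5 or
more vertices. -/
theorem compl_of_chordal_has_no_hole {V : Type*} [Fintype V] (G : SimpleGraph V)
    (hG : ∀ k : ℕ, 4 ≤ k → IsEmpty (SimpleGraph.cycleGraph k ↪g G)) :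
    ∀ k : ℕ, 5 ≤ k → IsEmpty (SimpleGraph.cycleGraph k ↪g Gᶜ) := by
  intro k hk
  constructor
  intro e
  have e' : (cycleGraph k)ᶜ ↪g G := (compl_compl G) ▸ embCompl e
  rcases eq_or_lt_of_le hk with h | h
  · exact (hG 5 (by norm_num)).false (e'.comp (h ▸ c5EmbComplC5))
  · obtain ⟨n, rfl⟩ : ∃ n, k = n + 6 := ⟨k - 6, by omega⟩
    exact (hG 4 (by norm_num)).false (e'.comp (c4EmbComplC n))
end

section
/- Let G be a simple graph containing no induced cycle on 5 or more vertices, and let {u,v} be an edge of G. Then every induced cycle on 5 or more vertices in the graph G − {u,v} has length exactly 5 or exactly 6. -/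
lemma fin_sub_val_eq_one {n : ℕ} (hn : 2 ≤ n) (a b : Fin n) :
    (a - b).val = 1 ↔ (a.val = b.val + 1 ∨ (a.val = 0 ∧ b.val + 1 = n)) := by
  have ha := a.isLt; have hb := b.isLt
  rw [Fin.sub_def, Fin.val_mk]
  rcases le_or_gt b.val a.val with h1 | h1
  · have h2 : n - b.val + a.val = (a.val - b.val) + n := by omega
    rw [h2, Nat.add_mod_right, Nat.mod_eq_of_lt (by omega : a.val - b.val < n)]
    constructor
    · intro h3; omega
    · intro h3; omega
  · rw [Nat.mod_eq_of_lt (by omega : n - b.val + a.val < n)]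
    constructor
    · intro h3; omega
    · intro h3; omega

lemma cyc_adj_iff {n : ℕ} (hn : 2 ≤ n) (a b : Fin n) :
    (SimpleGraph.cycleGraph n).Adj a b ↔
      ((a.val = b.val + 1 ∨ (a.val = 0 ∧ b.val + 1 = n)) ∨
       (b.val = a.val + 1 ∨ (b.val = 0 ∧ a.val + 1 = n))) := by
  rw [SimpleGraph.cycleGraph_adj', fin_sub_val_eq_one hn, fin_sub_val_eq_one hn]

def cycRot {k : ℕ} [NeZero k] (c : Fin k) :
    SimpleGraph.cycleGraph k ≃g SimpleGraph.cycleGraph k where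
  toEquiv := Equiv.addRight c
  map_rel_iff' := by
    intro a b
    simp only [Equiv.coe_addRight, SimpleGraph.cycleGraph_adj', add_sub_add_right_eq_sub]

lemma arc_embedding {V : Type*} {G H : SimpleGraph V} {u v : V} (huv : G.Adj u v)
    (hle : H ≤ G) (hH : ∀ a b : V, G.Adj a b → H.Adj a b ∨ s(a, b) = s(u, v))
    {k d : ℕ} (hk : 5 ≤ k) (hd2 : 2 ≤ d) (hdk : d + 2 ≤ k)
    (e : SimpleGraph.cycleGraph k ↪g H)
    (hu : e ⟨0, by omega⟩ = u) (hv : e ⟨d, by omega⟩ = v) :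
    Nonempty (SimpleGraph.cycleGraph (d + 1) ↪g G) := by
  refine ⟨⟨⟨fun x => e ⟨x.val, by omega⟩, ?_⟩, ?_⟩⟩
  · intro a b hab
    have h := e.injective hab
    rw [Fin.mk.injEq] at h
    exact Fin.ext h
  · intro a b
    have hav := a.isLt; have hbv := b.isLt
    show G.Adj (e ⟨a.val, by omega⟩) (e ⟨b.val, by omega⟩) ↔ _
    rw [cyc_adj_iff (by omega)]
    constructor
    · intro h
      rcases hH _ _ h with h' | h'
      · have hc := (cyc_adj_iff (show 2 ≤ k by omega) _ _).mp (e.map_rel_iff.mp h')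
        simp only [Fin.val_mk] at hc
        omega
      · rw [← hu, ← hv, Sym2.eq_iff] at h'
        rcases h' with ⟨h1, h2⟩ | ⟨h1, h2⟩
        · have h1' := e.injective h1
          have h2' := e.injective h2
          rw [Fin.mk.injEq] at h1' h2'
          omega
        · have h1' := e.injective h1
          have h2' := e.injective h2
          rw [Fin.mk.injEq] at h1' h2'
          omega
    · intro h
      by_cases hstep : a.val = b.val + 1 ∨ b.val = a.val + 1
      · have hadj : (SimpleGraph.cycleGraph k).Adj ⟨a.val, by omega⟩ ⟨b.val, by omega⟩ := by
          rw [cyc_adj_iff (show 2 ≤ k by omega)]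
          simp only [Fin.val_mk]
          omega
        exact hle (e.map_rel_iff.mpr hadj)
      · have hends : (a.val = 0 ∧ b.val = d) ∨ (b.val = 0 ∧ a.val = d) := by omega
        rcases hends with ⟨h1, h2⟩ | ⟨h1, h2⟩
        · rw [show (⟨a.val, by omega⟩ : Fin k) = ⟨0, by omega⟩ from Fin.ext (by simp [h1]),
            show (⟨b.val, by omega⟩ : Fin k) = ⟨d, by omega⟩ from Fin.ext (by simp [h2]),
            hu, hv]
          exact huv
        · rw [show (⟨b.val, by omega⟩ : Fin k) = ⟨0, by omega⟩ from Fin.ext (by simp [h1]),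
            show (⟨a.val, by omega⟩ : Fin k) = ⟨d, by omega⟩ from Fin.ext (by simp [h2]),
            hu, hv]
          exact huv.symm



/-- Let `G` be a simple graph containing no induced cycle on 5 or more vertices, and let
`{u,v}` be an edge of `G`.  Then every induced cycle on 5 or more vertices in the graph
`G − {u,v}` has length exactly 5 or exactly 6. -/
theorem hole_after_edge_deletion_has_length_five_or_six {V : Type*} (G : SimpleGraph V)
    (hG : ∀ k : ℕ, 5 ≤ k → IsEmpty (SimpleGraph.cycleGraph k ↪g G))
    {u v : V} (huv : G.Adj u v) :
    ∀ (k : ℕ), 5 ≤ k →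
      Nonempty (SimpleGraph.cycleGraph k ↪g G.deleteEdges {s(u, v)}) → k = 5 ∨ k = 6 := by
  intro k hk he
  obtain ⟨e⟩ := he
  haveI : NeZero k := ⟨by omega⟩
  set H := G.deleteEdges {s(u, v)} with hHdef
  have hle : H ≤ G := SimpleGraph.deleteEdges_le _
  have hH : ∀ a b : V, G.Adj a b → H.Adj a b ∨ s(a, b) = s(u, v) := by
    intro a b hab
    by_cases hc : s(a, b) = s(u, v)
    · exact Or.inr hc
    · exact Or.inl (by rw [hHdef, SimpleGraph.deleteEdges_adj]; exact ⟨hab, by simpa using hc⟩)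
  -- both u and v are in the range of e
  have key : (∃ i, e i = u) ∧ (∃ j, e j = v) := by
    by_contra hc
    refine (hG k hk).elim (⟨e.toEmbedding, ?_⟩ : SimpleGraph.cycleGraph k ↪g G)
    intro a b
    constructor
    · intro h
      rcases hH _ _ h with h' | h'
      · exact e.map_rel_iff.mp h'
      · exfalso
        apply hc
        rw [Sym2.eq_iff] at h'
        rcases h' with ⟨h1, h2⟩ | ⟨h1, h2⟩
        · exact ⟨⟨a, h1⟩, ⟨b, h2⟩⟩
        · exact ⟨⟨b, h2⟩, ⟨a, h1⟩⟩
    · intro h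
      exact hle (e.map_rel_iff.mpr h)
  obtain ⟨⟨i, hi⟩, ⟨j, hj⟩⟩ := key
  -- rotate so that u is at position 0
  set e₁ : SimpleGraph.cycleGraph k ↪g H := e.comp (cycRot i).toEmbedding with he₁
  have he₁x : ∀ x : Fin k, e₁ x = e (x + i) := fun x => rfl
  have hu0 : e₁ 0 = u := by rw [he₁x, zero_add, hi]
  set d : Fin k := j - i with hd
  have hv0 : e₁ d = v := by rw [he₁x, hd, sub_add_cancel, hj]
  have hdne : d.val ≠ 0 := by
    intro h0
    have : d = 0 := Fin.ext h0
    rw [this, hu0] at hv0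
    exact huv.ne hv0
  have hnadj : ¬ H.Adj u v := by
    rw [hHdef, SimpleGraph.deleteEdges_adj]
    simp
  have hncyc : ¬ (SimpleGraph.cycleGraph k).Adj 0 d := by
    intro h
    exact hnadj (by rw [← hu0, ← hv0]; exact e₁.map_rel_iff.mpr h)
  rw [cyc_adj_iff (by omega)] at hncyc
  simp only [Fin.val_zero, true_and] at hncyc
  have hdlt := d.isLt
  have hd2 : 2 ≤ d.val := by omega
  have hdk : d.val + 2 ≤ k := by omega
  -- first arc: length d.val + 1
  have harc1 : d.val + 1 ≤ 4 := by
    by_contra hc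
    refine (hG (d.val + 1) (by omega)).elim
      (arc_embedding huv hle hH hk hd2 hdk e₁ ?_ ?_).some
    · rw [show (⟨0, by omega⟩ : Fin k) = 0 from Fin.ext (by simp)]; exact hu0
    · rw [show (⟨d.val, by omega⟩ : Fin k) = d from Fin.ext rfl]; exact hv0
  -- second arc: length (k - d.val) + 1
  have hH' : ∀ a b : V, G.Adj a b → H.Adj a b ∨ s(a, b) = s(v, u) := by
    intro a b hab
    rcases hH a b hab with h | h
    · exact Or.inl h
    · exact Or.inr (by rw [h, Sym2.eq_swap])
  set e₂ : SimpleGraph.cycleGraph k ↪g H := e₁.comp (cycRot d).toEmbedding with he₂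
  have he₂x : ∀ x : Fin k, e₂ x = e₁ (x + d) := fun x => rfl
  have hv2 : e₂ 0 = v := by rw [he₂x, zero_add, hv0]
  have hu2 : e₂ ⟨k - d.val, by omega⟩ = u := by
    rw [he₂x, show (⟨k - d.val, by omega⟩ : Fin k) + d = 0 from Fin.ext (by
      rw [Fin.add_def]
      simp only [Fin.val_mk, Fin.val_zero]
      rw [show k - d.val + d.val = k by omega]
      exact Nat.mod_self k), hu0]
  have harc2 : (k - d.val) + 1 ≤ 4 := by
    by_contra hc
    refine (hG ((k - d.val) + 1) (by omega)).elim
      (arc_embedding huv.symm hle hH' hk (by omega) (by omega) e₂ ?_ hu2).some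
    rw [show (⟨0, by omega⟩ : Fin k) = 0 from Fin.ext (by simp)]; exact hv2
  omega
end

section
/- Let G be a simple graph with edge {u,v}, and let C be an induced cycle in G − {u,v} that contains both u and v. Then u and v split C into two internally disjoint u–v paths, and for each of these two paths P, the vertex set of P induces in G a chordless cycle (namely the cycle formed by P together with the edge {u,v}). -/
open SimpleGraph Walk

/-- A closed walk `w` (based at some vertex) is an induced (chordless) cycle in `G`:
it is a cycle, and the only edges of `G` among its vertices are the cycle edges. -/
def IsInducedCycle {V : Type*} (G : SimpleGraph V) {a : V} (w : G.Walk a a) : Prop :=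
  w.IsCycle ∧ ∀ x ∈ w.support, ∀ y ∈ w.support, G.Adj x y → s(x, y) ∈ w.edges

/-- Given an edge `{u,v}` of `G` and a `u`–`v` path `p` in `G − {u,v}`, the closed walk in
`G` obtained from `p` together with the edge `{u,v}`. -/
def closeUpWithEdge {V : Type*} {G : SimpleGraph V} {u v : V} (huv : G.Adj u v)
    (p : (G.deleteEdges {s(u, v)}).Walk u v) : G.Walk v v :=
  SimpleGraph.Walk.cons huv.symm (p.mapLe (G.deleteEdges_le {s(u, v)}))

private lemma end_mem_tail_support {V : Type*} {G : SimpleGraph V} {a b : V}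
    (w : G.Walk a b) (h : ¬ w.Nil) : b ∈ w.support.tail := by
  cases w with
  | nil => exact absurd Walk.Nil.nil h
  | cons h' w' => simp

private lemma mapLe_support {V : Type*} {G G' : SimpleGraph V} (h : G ≤ G') {a b : V}
    (p : G.Walk a b) : (p.mapLe h).support = p.support := by
  have hid : ⇑(Hom.ofLE h) = id := rfl
  rw [Walk.support_map, hid, List.map_id]

private lemma mapLe_edges {V : Type*} {G G' : SimpleGraph V} (h : G ≤ G') {a b : V}
    (p : G.Walk a b) : (p.mapLe h).edges = p.edges := by
  have hid : ⇑(Hom.ofLE h) = id := rfl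
  rw [Walk.edges_map, hid, Sym2.map_id, List.map_id]

private lemma closeUp_induced {V : Type*} {G : SimpleGraph V} {u v : V} (huv : G.Adj u v)
    {a : V} {w : (G.deleteEdges {s(u, v)}).Walk a a}
    (hw : IsInducedCycle (G.deleteEdges {s(u, v)}) w)
    {p q : (G.deleteEdges {s(u, v)}).Walk u v}
    (hp : p.IsPath)
    (hdisj : ∀ x, x ∈ p.support → x ∈ q.support → x = u ∨ x = v)
    (hsup : ∀ x, x ∈ w.support ↔ x ∈ p.support ∨ x ∈ q.support)
    (hedge : ∀ e, e ∈ w.edges ↔ e ∈ p.edges ∨ e ∈ q.edges) :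
    IsInducedCycle G (closeUpWithEdge huv p) := by
  have hnotmem : s(u, v) ∉ p.edges := by
    intro hmem
    have := p.edges_subset_edgeSet hmem
    rw [edgeSet_deleteEdges] at this
    exact this.2 rfl
  constructor
  · rw [closeUpWithEdge, Walk.cons_isCycle_iff]
    refine ⟨hp.mapLe _, ?_⟩
    rw [mapLe_edges, show s(v, u) = s(u, v) from Sym2.eq_swap]
    exact hnotmem
  · intro x hx y hy hxy
    have hx' : x ∈ p.support := by
      rcases by simpa [closeUpWithEdge, mapLe_support] using hx with h | h
      · exact h ▸ p.end_mem_support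
      · exact h
    have hy' : y ∈ p.support := by
      rcases by simpa [closeUpWithEdge, mapLe_support] using hy with h | h
      · exact h ▸ p.end_mem_support
      · exact h
    have hedges : (closeUpWithEdge huv p).edges = s(v, u) :: p.edges := by
      rw [closeUpWithEdge, Walk.edges_cons, mapLe_edges]
    rw [hedges]
    by_cases hcase : s(x, y) = s(u, v)
    · rw [hcase, Sym2.eq_swap]
      exact List.mem_cons_self
    · have hadj : (G.deleteEdges {s(u, v)}).Adj x y :=
        deleteEdges_adj.mpr ⟨hxy, by simpa using hcase⟩
      have hew : s(x, y) ∈ w.edges :=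
        hw.2 x ((hsup x).mpr (Or.inl hx')) y ((hsup y).mpr (Or.inl hy')) hadj
      rcases (hedge _).mp hew with h | h
      · exact List.mem_cons_of_mem _ h
      · exfalso
        have hxq : x ∈ q.support := q.fst_mem_support_of_mem_edges h
        have hyq : y ∈ q.support := q.snd_mem_support_of_mem_edges h
        rcases hdisj x hx' hxq with rfl | rfl <;> rcases hdisj y hy' hyq with rfl | rfl
        · exact hxy.ne rfl
        · exact hcase rfl
        · exact hcase Sym2.eq_swap
        · exact hxy.ne rfl

/-- Let `G` be a simple graph with edge `{u,v}`, and let `C` (here, the closed walk `w`) be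
an induced cycle in `G − {u,v}` that contains both `u` and `v`.  Then `u` and `v` split `C`
into two internally disjoint `u`–`v` paths (whose vertices and edges together are exactly
those of `C`), and for each of these two paths `P`, the vertex set of `P` induces in `G` a
chordless cycle, namely the cycle formed by `P` together with the edge `{u,v}`. -/
theorem induced_cycle_splits_into_two_arcs {V : Type*} (G : SimpleGraph V)
    {u v : V} (huv : G.Adj u v) {a : V} (w : (G.deleteEdges {s(u, v)}).Walk a a)
    (hw : IsInducedCycle (G.deleteEdges {s(u, v)}) w)
    (hu : u ∈ w.support) (hv : v ∈ w.support) :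
    ∃ p q : (G.deleteEdges {s(u, v)}).Walk u v,
      p.IsPath ∧ q.IsPath ∧
      (∀ x, x ∈ p.support → x ∈ q.support → x = u ∨ x = v) ∧
      (∀ x, x ∈ w.support ↔ x ∈ p.support ∨ x ∈ q.support) ∧
      (∀ e, e ∈ w.edges ↔ e ∈ p.edges ∨ e ∈ q.edges) ∧
      IsInducedCycle G (closeUpWithEdge huv p) ∧
      IsInducedCycle G (closeUpWithEdge huv q) := by
  classical
  have hne : u ≠ v := huv.ne
  have hwnil : ¬ w.Nil := hw.1.not_nil
  -- membership in a non-nil closed walk is membership in the tail of its support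
  have hmemtail : ∀ {b : V} (c : (G.deleteEdges {s(u, v)}).Walk b b), ¬ c.Nil →
      ∀ x, x ∈ c.support ↔ x ∈ c.support.tail := by
    intro b c hc x
    constructor
    · intro h
      rcases List.mem_cons.mp (c.support_eq_cons ▸ h) with rfl | h'
      · exact end_mem_tail_support c hc
      · exact h'
    · exact List.mem_of_mem_tail
  set w' := w.rotate u hu with hw'def
  have hcyc' : w'.IsCycle := hw.1.rotate hu
  have hrot := w.support_rotate u hu
  have hrote := w.rotate_edges u hu
  have hwmem : ∀ x, x ∈ w.support ↔ x ∈ w'.support := fun x => by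
    rw [hmemtail w hwnil, hmemtail w' hcyc'.not_nil, hrot.mem_iff]
  have hwedge : ∀ e, e ∈ w.edges ↔ e ∈ w'.edges := fun e => hrote.mem_iff.symm
  have hv' : v ∈ w'.support := (hwmem v).mp hv
  set p := w'.takeUntil v hv' with hpdef
  set q' := w'.dropUntil v hv' with hqdef
  have hspec : p.append q' = w' := w'.take_spec hv'
  have htail : w'.support.tail = p.support.tail ++ q'.support.tail := by
    rw [← hspec, tail_support_append]
  have htnd : (p.support.tail ++ q'.support.tail).Nodup := htail ▸ hcyc'.2
  have hnd1 : p.support.tail.Nodup := htnd.of_append_left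
  have hnd2 : q'.support.tail.Nodup := htnd.of_append_right
  have hdisjt : List.Disjoint p.support.tail q'.support.tail :=
    List.disjoint_of_nodup_append htnd
  have hvp : v ∈ p.support.tail := end_mem_tail_support p (not_nil_of_ne hne)
  have hvq : u ∈ q'.support.tail := end_mem_tail_support q' (not_nil_of_ne hne.symm)
  have hppath : p.IsPath := by
    apply Walk.IsPath.mk'
    rw [p.support_eq_cons]
    exact List.nodup_cons.mpr ⟨fun hmem => hdisjt hmem hvq, hnd1⟩
  have hqpath' : q'.IsPath := by
    apply Walk.IsPath.mk'
    rw [q'.support_eq_cons]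
    exact List.nodup_cons.mpr ⟨fun hmem => hdisjt hvp hmem, hnd2⟩
  set q := q'.reverse with hqrdef
  have hqsup : ∀ x, x ∈ q.support ↔ x ∈ q'.support := fun x => by
    rw [hqrdef, Walk.support_reverse, List.mem_reverse]
  have hqedge : ∀ e, e ∈ q.edges ↔ e ∈ q'.edges := fun e => by
    rw [hqrdef, Walk.edges_reverse, List.mem_reverse]
  have hmemp : ∀ x, x ∈ p.support ↔ x = u ∨ x ∈ p.support.tail := fun x => by
    rw [p.support_eq_cons]; simp only [List.mem_cons, List.tail_cons]
  have hmemq : ∀ x, x ∈ q'.support ↔ x = v ∨ x ∈ q'.support.tail := fun x => by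
    rw [q'.support_eq_cons]; simp only [List.mem_cons, List.tail_cons]
  have hdisj : ∀ x, x ∈ p.support → x ∈ q.support → x = u ∨ x = v := by
    intro x hxp hxq
    rw [hqsup] at hxq
    rcases (hmemp x).mp hxp with rfl | hxp'
    · exact Or.inl rfl
    rcases (hmemq x).mp hxq with rfl | hxq'
    · exact Or.inr rfl
    exact absurd hxq' (hdisjt hxp')
  have hsup : ∀ x, x ∈ w.support ↔ x ∈ p.support ∨ x ∈ q.support := by
    intro x
    rw [hwmem, ← hspec, mem_support_append_iff, hqsup]
  have hedge : ∀ e, e ∈ w.edges ↔ e ∈ p.edges ∨ e ∈ q.edges := by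
    intro e
    rw [hwedge, ← hspec, edges_append, List.mem_append, hqedge]
  have hqpath : q.IsPath := hqpath'.reverse
  refine ⟨p, q, hppath, hqpath, hdisj, hsup, hedge,
    closeUp_induced huv hw hppath hdisj hsup hedge, ?_⟩
  exact closeUp_induced huv hw hqpath (fun x h1 h2 => hdisj x h2 h1)
    (fun x => (hsup x).trans or_comm) (fun e => (hedge e).trans or_comm)
end

section
/- Correctness of the hole-detection test: let G be a simple graph containing no induced cycle on 5 or more vertices, let {u,v} be an edge of G, and let H = G − {u,v}. Then H contains an induced cycle on 5 or more vertices if and only if in H there exist either (i) vertices x, a, b, pairwise distinct and distinct from u and v, with {u,x}, {x,v}, {u,a}, {a,b}, {b,v} edges of H and {u,b}, {a,v}, {x,a}, {x,b} non-edges of H, or (ii) vertices a, b, c, d, pairwise distinct and distinct from u and v, with {u,a}, {a,b}, {b,v}, {u,c}, {c,d}, {d,v} edges of H and {u,b}, {a,v}, {u,d}, {c,v}, {a,c}, {a,d}, {b,c}, {b,d} non-edges of H. -/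
open SimpleGraph

lemma cycleAdj_iff {n : ℕ} (hn : 2 ≤ n) (a b : Fin n) :
    (cycleGraph n).Adj a b ↔
      (a.val + 1 = b.val ∨ b.val + 1 = a.val ∨ (a.val = 0 ∧ b.val + 1 = n) ∨
        (b.val = 0 ∧ a.val + 1 = n)) := by
  have ha := a.isLt
  have hb := b.isLt
  rw [cycleGraph_adj', Fin.sub_def, Fin.sub_def]
  simp only [Fin.val_mk]
  constructor
  · rintro (h | h)
    · rcases Nat.lt_or_ge (n - b.val + a.val) n with h' | h'
      · rw [Nat.mod_eq_of_lt h'] at h; omega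
      · rw [Nat.mod_eq_sub_mod h', Nat.mod_eq_of_lt (by omega)] at h; omega
    · rcases Nat.lt_or_ge (n - a.val + b.val) n with h' | h'
      · rw [Nat.mod_eq_of_lt h'] at h; omega
      · rw [Nat.mod_eq_sub_mod h', Nat.mod_eq_of_lt (by omega)] at h; omega
  · rintro (h | h | ⟨h1, h2⟩ | ⟨h1, h2⟩)
    · right
      rcases Nat.lt_or_ge (n - a.val + b.val) n with h' | h'
      · rw [Nat.mod_eq_of_lt h']; omega
      · rw [Nat.mod_eq_sub_mod h', Nat.mod_eq_of_lt (by omega)]; omega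
    · left
      rcases Nat.lt_or_ge (n - b.val + a.val) n with h' | h'
      · rw [Nat.mod_eq_of_lt h']; omega
      · rw [Nat.mod_eq_sub_mod h', Nat.mod_eq_of_lt (by omega)]; omega
    · left
      have h3 : n - b.val + a.val = 1 := by omega
      have h4 : 1 < n := by omega
      rw [h3, Nat.mod_eq_of_lt h4]
    · right
      have h3 : n - a.val + b.val = 1 := by omega
      have h4 : 1 < n := by omega
      rw [h3, Nat.mod_eq_of_lt h4]

/-- rotation automorphism of the cycle graph, as an embedding -/
def rotEmb {k : ℕ} [NeZero k] (t : Fin k) : cycleGraph k ↪g cycleGraph k where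
  toFun i := i + t
  inj' := fun a b h => by simpa using h
  map_rel_iff' := by
    intro a b
    show (cycleGraph k).Adj (a + t) (b + t) ↔ (cycleGraph k).Adj a b
    rw [cycleGraph_adj', cycleGraph_adj', add_sub_add_right_eq_sub, add_sub_add_right_eq_sub]

@[simp] lemma rotEmb_apply {k : ℕ} [NeZero k] (t i : Fin k) : rotEmb t i = i + t := rfl

lemma pathHole {V : Type*} {G H : SimpleGraph V} (hle : H ≤ G) {u v : V}
    (huv : G.Adj u v) (hGH : ∀ a b : V, G.Adj a b → H.Adj a b ∨ s(a, b) = s(u, v))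
    {k : ℕ} (hk : 5 ≤ k) (e : cycleGraph k ↪g H) {j : Fin k}
    (h0 : e ⟨0, by omega⟩ = u) (hj : e j = v) (hj2 : 2 ≤ j.val) (hjk : j.val ≤ k - 2) :
    Nonempty (cycleGraph (j.val + 1) ↪g G) := by
  have hkj := j.isLt
  refine ⟨⟨⟨fun m => e ⟨m.val, by omega⟩, ?_⟩, ?_⟩⟩
  · intro m m' h
    have h2 := congrArg Fin.val (e.injective h)
    simp only [Fin.val_mk] at h2
    exact Fin.ext h2
  · intro m m'
    show G.Adj (e ⟨m.val, by omega⟩) (e ⟨m'.val, by omega⟩) ↔ (cycleGraph (j.val + 1)).Adj m m'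
    have hm := m.isLt
    have hm' := m'.isLt
    constructor
    · intro hadj
      rcases hGH _ _ hadj with hA | hS
      · have := e.map_adj_iff.mp hA
        rw [cycleAdj_iff (by omega)] at this
        simp only [Fin.val_mk] at this
        rw [cycleAdj_iff (by omega)]
        omega
      · rw [Sym2.eq_iff] at hS
        rw [cycleAdj_iff (by omega)]
        rcases hS with ⟨he1, he2⟩ | ⟨he1, he2⟩
        · rw [← h0] at he1; rw [← hj] at he2
          have e1 := congrArg Fin.val (e.injective he1)
          have e2 := congrArg Fin.val (e.injective he2)
          simp only [Fin.val_mk] at e1 e2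
          omega
        · rw [← hj] at he1; rw [← h0] at he2
          have e1 := congrArg Fin.val (e.injective he1)
          have e2 := congrArg Fin.val (e.injective he2)
          simp only [Fin.val_mk] at e1 e2
          omega
    · intro hadj
      rw [cycleAdj_iff (by omega)] at hadj
      rcases hadj with h | h | ⟨h1, h2⟩ | ⟨h1, h2⟩
      · exact hle (e.map_adj_iff.mpr (by rw [cycleAdj_iff (by omega)]; simp only [Fin.val_mk]; omega))
      · exact hle (e.map_adj_iff.mpr (by rw [cycleAdj_iff (by omega)]; simp only [Fin.val_mk]; omega))
      · have hm0 : (⟨m.val, by omega⟩ : Fin k) = ⟨0, by omega⟩ := Fin.ext h1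
        have hmj : (⟨m'.val, by omega⟩ : Fin k) = j := Fin.ext (by simp; omega)
        rw [hm0, hmj, h0, hj]; exact huv
      · have hm0 : (⟨m'.val, by omega⟩ : Fin k) = ⟨0, by omega⟩ := Fin.ext h1
        have hmj : (⟨m.val, by omega⟩ : Fin k) = j := Fin.ext (by simp; omega)
        rw [hm0, hmj, h0, hj]; exact huv.symm

lemma c5_embed {V : Type*} {H : SimpleGraph V} {v0 v1 v2 v3 v4 : V}
    (h01 : H.Adj v0 v1) (h12 : H.Adj v1 v2) (h23 : H.Adj v2 v3) (h34 : H.Adj v3 v4)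
    (h40 : H.Adj v4 v0)
    (n02 : ¬H.Adj v0 v2) (n13 : ¬H.Adj v1 v3) (n24 : ¬H.Adj v2 v4) (n03 : ¬H.Adj v0 v3)
    (n14 : ¬H.Adj v1 v4)
    (d02 : v0 ≠ v2) (d13 : v1 ≠ v3) (d24 : v2 ≠ v4) (d03 : v0 ≠ v3) (d14 : v1 ≠ v4) :
    Nonempty (cycleGraph 5 ↪g H) := by
  have d01 := h01.ne
  have d12 := h12.ne
  have d23 := h23.ne
  have d34 := h34.ne
  have d40 := h40.ne
  refine ⟨⟨⟨![v0, v1, v2, v3, v4], ?_⟩, ?_⟩⟩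
  · intro i j hij
    fin_cases i <;> fin_cases j <;>
      first
        | rfl
        | exact absurd hij (by assumption)
        | exact absurd hij.symm (by assumption)
  · intro i j
    fin_cases i <;> fin_cases j <;>
      first
        | exact iff_of_true (by assumption) (by decide)
        | exact iff_of_true (SimpleGraph.Adj.symm (by assumption)) (by decide)
        | exact iff_of_false (by assumption) (by decide)
        | exact iff_of_false (fun hh => absurd hh.symm (by assumption)) (by decide)
        | exact iff_of_false (H.loopless.irrefl _) (by decide)

set_option maxHeartbeats 1000000 in
lemma c6_embed {V : Type*} {H : SimpleGraph V} {v0 v1 v2 v3 v4 v5 : V}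
    (h01 : H.Adj v0 v1) (h12 : H.Adj v1 v2) (h23 : H.Adj v2 v3) (h34 : H.Adj v3 v4)
    (h45 : H.Adj v4 v5) (h50 : H.Adj v5 v0)
    (n02 : ¬H.Adj v0 v2) (n13 : ¬H.Adj v1 v3) (n24 : ¬H.Adj v2 v4) (n35 : ¬H.Adj v3 v5)
    (n04 : ¬H.Adj v0 v4) (n15 : ¬H.Adj v1 v5) (n03 : ¬H.Adj v0 v3) (n14 : ¬H.Adj v1 v4)
    (n25 : ¬H.Adj v2 v5)
    (d02 : v0 ≠ v2) (d13 : v1 ≠ v3) (d24 : v2 ≠ v4) (d35 : v3 ≠ v5) (d04 : v0 ≠ v4)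
    (d15 : v1 ≠ v5) (d03 : v0 ≠ v3) (d14 : v1 ≠ v4) (d25 : v2 ≠ v5) :
    Nonempty (cycleGraph 6 ↪g H) := by
  have d01 := h01.ne
  have d12 := h12.ne
  have d23 := h23.ne
  have d34 := h34.ne
  have d45 := h45.ne
  have d50 := h50.ne
  refine ⟨⟨⟨![v0, v1, v2, v3, v4, v5], ?_⟩, ?_⟩⟩
  · intro i j hij
    fin_cases i <;> fin_cases j <;>
      first
        | rfl
        | exact absurd hij (by assumption)
        | exact absurd hij.symm (by assumption)
  · intro i j
    fin_cases i <;> fin_cases j <;>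
      first
        | exact iff_of_true (by assumption) (by decide)
        | exact iff_of_true (SimpleGraph.Adj.symm (by assumption)) (by decide)
        | exact iff_of_false (by assumption) (by decide)
        | exact iff_of_false (fun hh => absurd hh.symm (by assumption)) (by decide)
        | exact iff_of_false (H.loopless.irrefl _) (by decide)

/-- Correctness of the hole-detection test.  Let `G` be a simple graph containing no
induced cycle on 5 or more vertices, let `{u,v}` be an edge of `G`, and let
`H = G − {u,v}`.  Then `H` contains an induced cycle on 5 or more vertices if and only if
in `H` there exist either
(i) vertices `x, a, b`, pairwise distinct and distinct from `u` and `v`, with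
`{u,x}, {x,v}, {u,a}, {a,b}, {b,v}` edges of `H` and `{u,b}, {a,v}, {x,a}, {x,b}`
non-edges of `H`, or
(ii) vertices `a, b, c, d`, pairwise distinct and distinct from `u` and `v`, with
`{u,a}, {a,b}, {b,v}, {u,c}, {c,d}, {d,v}` edges of `H` and
`{u,b}, {a,v}, {u,d}, {c,v}, {a,c}, {a,d}, {b,c}, {b,d}` non-edges of `H`. -/
theorem hole_detection_correctness {V : Type*} (G : SimpleGraph V)
    (hG : ∀ k : ℕ, 5 ≤ k → IsEmpty (SimpleGraph.cycleGraph k ↪g G))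
    {u v : V} (huv : G.Adj u v) (H : SimpleGraph V) (hH : H = G.deleteEdges {s(u, v)}) :
    (∃ k : ℕ, 5 ≤ k ∧ Nonempty (SimpleGraph.cycleGraph k ↪g H)) ↔
      ((∃ x a b : V, x ≠ a ∧ x ≠ b ∧ a ≠ b ∧
          x ≠ u ∧ x ≠ v ∧ a ≠ u ∧ a ≠ v ∧ b ≠ u ∧ b ≠ v ∧
          H.Adj u x ∧ H.Adj x v ∧ H.Adj u a ∧ H.Adj a b ∧ H.Adj b v ∧
          ¬ H.Adj u b ∧ ¬ H.Adj a v ∧ ¬ H.Adj x a ∧ ¬ H.Adj x b) ∨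
        (∃ a b c d : V, a ≠ b ∧ a ≠ c ∧ a ≠ d ∧ b ≠ c ∧ b ≠ d ∧ c ≠ d ∧
          a ≠ u ∧ a ≠ v ∧ b ≠ u ∧ b ≠ v ∧ c ≠ u ∧ c ≠ v ∧ d ≠ u ∧ d ≠ v ∧
          H.Adj u a ∧ H.Adj a b ∧ H.Adj b v ∧ H.Adj u c ∧ H.Adj c d ∧ H.Adj d v ∧
          ¬ H.Adj u b ∧ ¬ H.Adj a v ∧ ¬ H.Adj u d ∧ ¬ H.Adj c v ∧
          ¬ H.Adj a c ∧ ¬ H.Adj a d ∧ ¬ H.Adj b c ∧ ¬ H.Adj b d)) := by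
  have hHuv : ¬H.Adj u v := by rw [hH]; simp [SimpleGraph.deleteEdges_adj]
  have hle : H ≤ G := by rw [hH]; exact SimpleGraph.deleteEdges_le _
  have hGH : ∀ a b : V, G.Adj a b → H.Adj a b ∨ s(a, b) = s(u, v) := by
    intro a b hab
    by_cases hs : s(a, b) = s(u, v)
    · exact Or.inr hs
    · refine Or.inl ?_
      rw [hH]
      exact SimpleGraph.deleteEdges_adj.mpr ⟨hab, by simpa using hs⟩
  constructor
  · rintro ⟨k, hk, ⟨e⟩⟩
    haveI : NeZero k := ⟨by omega⟩
    -- find the special non-adjacent pair mapping to u, v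
    have key : ∃ i j' : Fin k, e i = u ∧ e j' = v ∧ ¬(cycleGraph k).Adj i j' := by
      by_contra hcon
      push_neg at hcon
      refine (hG k hk).false ⟨⟨⇑e, e.injective⟩, ?_⟩
      intro a b
      simp only [Function.Embedding.coeFn_mk]
      constructor
      · intro hab
        rcases hGH _ _ hab with hA | hS
        · exact e.map_adj_iff.mp hA
        · rw [Sym2.eq_iff] at hS
          rcases hS with ⟨h1, h2⟩ | ⟨h1, h2⟩
          · exact hcon a b h1 h2
          · exact (hcon b a h2 h1).symm
      · intro hab
        exact hle (e.map_adj_iff.mpr hab)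
    obtain ⟨i₀, j₀, hiu, hjv, hnadj⟩ := key
    have hne : i₀ ≠ j₀ := by
      intro h
      exact G.ne_of_adj huv (by rw [← hiu, ← hjv, h])
    set e₁ : cycleGraph k ↪g H := e.comp (rotEmb i₀) with he₁
    have e₁app : ∀ x : Fin k, e₁ x = e (x + i₀) := fun x => rfl
    set j₁ : Fin k := j₀ - i₀ with hj₁def
    have h0 : e₁ 0 = u := by rw [e₁app, zero_add, hiu]
    have hjv1 : e₁ j₁ = v := by rw [e₁app, hj₁def, sub_add_cancel, hjv]
    have hnadj1 : ¬(cycleGraph k).Adj 0 j₁ := by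
      intro h
      apply hnadj
      have := (rotEmb i₀).map_adj_iff.mpr h
      simpa [hj₁def, sub_add_cancel] using this
    have hj1ne : j₁.val ≠ 0 := by
      intro h
      apply hne
      have : j₁ = 0 := Fin.ext h
      rw [hj₁def] at this
      exact (sub_eq_zero.mp this).symm
    have hv0 : (0 : Fin k).val = 0 := rfl
    rw [cycleAdj_iff (by omega)] at hnadj1
    push_neg at hnadj1
    rw [hv0] at hnadj1
    have hkj := j₁.isLt
    have hp2 : 2 ≤ j₁.val := by omega
    have hpk : j₁.val ≤ k - 2 := by omega
    have hz : (⟨0, by omega⟩ : Fin k) = 0 := rfl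
    have P1 : Nonempty (cycleGraph (j₁.val + 1) ↪g G) :=
      pathHole hle huv hGH hk e₁ (by rw [hz]; exact h0) hjv1 hp2 hpk
    have hq1 : j₁.val + 1 ≤ 4 := by
      by_contra h
      exact (hG (j₁.val + 1) (by omega)).false P1.some
    -- second application, reversed
    set e₂ : cycleGraph k ↪g H := e₁.comp (rotEmb j₁) with he₂
    have e₂app : ∀ x : Fin k, e₂ x = e₁ (x + j₁) := fun x => rfl
    set j₂ : Fin k := 0 - j₁ with hj₂def
    have h0₂ : e₂ 0 = v := by rw [e₂app, zero_add, hjv1]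
    have hjv2 : e₂ j₂ = u := by rw [e₂app, hj₂def, sub_add_cancel, h0]
    have hnadj2 : ¬(cycleGraph k).Adj 0 j₂ := by
      intro h
      have := (rotEmb j₁).map_adj_iff.mpr h
      simp only [rotEmb_apply, zero_add, hj₂def, sub_add_cancel] at this
      rw [cycleAdj_iff (by omega)] at this
      rw [hv0] at this
      omega
    have hj2v : j₂.val = k - j₁.val := by
      rw [hj₂def, Fin.sub_def]
      simp only [Fin.val_mk, hv0]
      rw [Nat.add_zero, Nat.mod_eq_of_lt (by omega)]
    have hGH' : ∀ a b : V, G.Adj a b → H.Adj a b ∨ s(a, b) = s(v, u) := by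
      intro a b hab
      refine (hGH a b hab).imp id (fun hh => hh.trans ?_)
      exact Sym2.eq_swap
    have P2 : Nonempty (cycleGraph (j₂.val + 1) ↪g G) :=
      pathHole hle huv.symm hGH' hk e₂ (by rw [hz]; exact h0₂) hjv2 (by omega) (by omega)
    have hq2 : j₂.val + 1 ≤ 4 := by
      by_contra h
      exact (hG (j₂.val + 1) (by omega)).false P2.some
    have hcases : (j₁.val = 2 ∧ k = 5) ∨ (j₁.val = 3 ∧ k = 5) ∨ (j₁.val = 3 ∧ k = 6) := by
      omega
    rcases hcases with ⟨hp, hk5⟩ | ⟨hp, hk5⟩ | ⟨hp, hk5⟩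
    · -- k = 5, v = e₁ 2 : config (i) with x = e₁ 1, a = e₁ 4, b = e₁ 3
      subst hk5
      have hju : u = e₁ ⟨0, Nat.lt_of_sub_eq_succ rfl⟩ := by rw [← h0]; congr 1
      have hjv' : v = e₁ ⟨2, Nat.lt_of_sub_eq_succ rfl⟩ := by
        rw [← hjv1]
        congr 1
        exact (Fin.ext (by simpa using hp.symm)).symm
      refine Or.inl ⟨e₁ ⟨1, Nat.lt_of_sub_eq_succ rfl⟩, e₁ ⟨4, Nat.lt_of_sub_eq_succ rfl⟩, e₁ ⟨3, Nat.lt_of_sub_eq_succ rfl⟩, ?_, ?_, ?_, ?_, ?_,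
        ?_, ?_, ?_, ?_, ?_, ?_, ?_, ?_, ?_, ?_, ?_, ?_, ?_⟩ <;>
        (try rw [hju]) <;> (try rw [hjv']) <;>
        first
          | exact fun hh => absurd (e₁.injective hh) (by decide)
          | exact e₁.map_adj_iff.mpr (by decide)
          | exact fun hh => absurd (e₁.map_adj_iff.mp hh) (by decide)
    · -- k = 5, v = e₁ 3 : config (i) with x = e₁ 4, a = e₁ 1, b = e₁ 2
      subst hk5
      have hju : u = e₁ ⟨0, Nat.lt_of_sub_eq_succ rfl⟩ := by rw [← h0]; congr 1
      have hjv' : v = e₁ ⟨3, Nat.lt_of_sub_eq_succ rfl⟩ := by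
        rw [← hjv1]
        congr 1
        exact (Fin.ext (by simpa using hp.symm)).symm
      refine Or.inl ⟨e₁ ⟨4, Nat.lt_of_sub_eq_succ rfl⟩, e₁ ⟨1, Nat.lt_of_sub_eq_succ rfl⟩, e₁ ⟨2, Nat.lt_of_sub_eq_succ rfl⟩, ?_, ?_, ?_, ?_, ?_,
        ?_, ?_, ?_, ?_, ?_, ?_, ?_, ?_, ?_, ?_, ?_, ?_, ?_⟩ <;>
        (try rw [hju]) <;> (try rw [hjv']) <;>
        first
          | exact fun hh => absurd (e₁.injective hh) (by decide)
          | exact e₁.map_adj_iff.mpr (by decide)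
          | exact fun hh => absurd (e₁.map_adj_iff.mp hh) (by decide)
    · -- k = 6, v = e₁ 3 : config (ii) with a = e₁ 1, b = e₁ 2, c = e₁ 5, d = e₁ 4
      subst hk5
      have hju : u = e₁ ⟨0, Nat.lt_of_sub_eq_succ rfl⟩ := by rw [← h0]; congr 1
      have hjv' : v = e₁ ⟨3, Nat.lt_of_sub_eq_succ rfl⟩ := by
        rw [← hjv1]
        congr 1
        exact (Fin.ext (by simpa using hp.symm)).symm
      refine Or.inr ⟨e₁ ⟨1, Nat.lt_of_sub_eq_succ rfl⟩, e₁ ⟨2, Nat.lt_of_sub_eq_succ rfl⟩, e₁ ⟨5, Nat.lt_of_sub_eq_succ rfl⟩, e₁ ⟨4, Nat.lt_of_sub_eq_succ rfl⟩,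
        ?_, ?_, ?_, ?_, ?_, ?_, ?_, ?_, ?_, ?_, ?_, ?_, ?_, ?_, ?_, ?_, ?_, ?_, ?_, ?_, ?_, ?_,
        ?_, ?_, ?_, ?_, ?_, ?_⟩ <;>
        (try rw [hju]) <;> (try rw [hjv']) <;>
        first
          | exact fun hh => absurd (e₁.injective hh) (by decide)
          | exact e₁.map_adj_iff.mpr (by decide)
          | exact fun hh => absurd (e₁.map_adj_iff.mp hh) (by decide)
  · rintro (⟨x, a, b, hxa, hxb, hab, hxu, hxv, hau, hav, hbu, hbv,
        e1, e2, e3, e4, e5, m1, m2, m3, m4⟩ |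
      ⟨a, b, c, d, hab, hac, had, hbc, hbd, hcd, hau, hav, hbu, hbv, hcu, hcv, hdu, hdv,
        e1, e2, e3, e4, e5, e6, m1, m2, m3, m4, m5, m6, m7, m8⟩)
    · refine ⟨5, le_refl 5, c5_embed (v0 := u) (v1 := x) (v2 := v) (v3 := b) (v4 := a)
        e1 e2 e5.symm e4.symm e3.symm
        hHuv m4 (fun hh => m2 hh.symm) m1 m3
        huv.ne hxb hav.symm hbu.symm hxa⟩
    · refine ⟨6, by norm_num, c6_embed (v0 := u) (v1 := a) (v2 := b) (v3 := v) (v4 := d)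
        (v5 := c) e1 e2 e3 e6.symm e5.symm e4.symm
        m1 m2 m8 (fun hh => m4 hh.symm) m3 m5
        hHuv m6 m7
        hbu.symm hav hbd hcv.symm hdu.symm hac huv.ne had hbc⟩
end
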